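/- Fix r ≥ 2 and 0 ≤ ℓ ≤ r-1 with ℓ odd, and let α = r - (ℓ+1)/2 ≥ ℓ. Define the ordered r-graph H on [6n] whose edges consist of (ℓ+1)/2 pairs from the matching M₂ = {{2i-1, 2i} : 1 ≤ i ≤ n} together with r - ℓ - 1 vertices from (5n, 6n]. Then e(H) = C(n, (ℓ+1)/2)·C(n, r-ℓ-1) = Θ(n^α), and H contains no two edges e, f with |e ∩ f| = ℓ forming an interval r-partite configuration. -/

import Mathlib

/-- An interval in ℕ: a set of consecutive integers. -/
def IsIntervalN (I : Finset ℕ) : Prop := ∃ a b : ℕ, I = Finset.Icc a b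

/-- Every element of `I` is smaller than every element of `J`. -/
def Precedes (I J : Finset ℕ) : Prop := ∀ x ∈ I, ∀ y ∈ J, x < y

/-- An ordered hypergraph `H` is interval k-partite with parts of size at most `m`:
there are ℓ ≥ k disjoint intervals I₀ < I₁ < ⋯ < I_{ℓ-1}, each of size at most `m`,
such that every edge of `H` is contained in their union and intersects each of them. -/
def IntervalKPartiteB (k m : ℕ) (H : Finset (Finset ℕ)) : Prop :=
  ∃ ℓ, k ≤ ℓ ∧ ∃ I : ℕ → Finset ℕ,
    (∀ j < ℓ, IsIntervalN (I j)) ∧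
    (∀ j < ℓ, (I j).card ≤ m) ∧
    (∀ j j', j < j' → j' < ℓ → Precedes (I j) (I j')) ∧
    ∀ e ∈ H, (∀ x ∈ e, ∃ j < ℓ, x ∈ I j) ∧ (∀ j < ℓ, (e ∩ I j).Nonempty)

/-- An ordered hypergraph `H` is interval k-partite: there are ℓ ≥ k disjoint
intervals I₀ < I₁ < ⋯ < I_{ℓ-1} such that every edge of `H` is contained in
their union and intersects each of them. -/
def IntervalKPartite (k : ℕ) (H : Finset (Finset ℕ)) : Prop :=
  ∃ ℓ, k ≤ ℓ ∧ ∃ I : ℕ → Finset ℕ,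
    (∀ j < ℓ, IsIntervalN (I j)) ∧
    (∀ j j', j < j' → j' < ℓ → Precedes (I j) (I j')) ∧
    ∀ e ∈ H, (∀ x ∈ e, ∃ j < ℓ, x ∈ I j) ∧ (∀ j < ℓ, (e ∩ I j).Nonempty)

/-- An ordered hypergraph `H` is interval r-partite in the exact sense: there are
intervals I₀ < I₁ < ⋯ < I_{r-1} such that every edge of `H` has exactly one
vertex in each of them (and is contained in their union). -/
def IntervalPartiteExact (r : ℕ) (H : Finset (Finset ℕ)) : Prop :=
  ∃ I : ℕ → Finset ℕ,
    (∀ j < r, IsIntervalN (I j)) ∧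
    (∀ j j', j < j' → j' < r → Precedes (I j) (I j')) ∧
    ∀ e ∈ H, (∀ x ∈ e, ∃ j < r, x ∈ I j) ∧ (∀ j < r, (e ∩ I j).card = 1)

open Classical in
/-- Construction 4 (ℓ odd) on vertex set [6n]: each edge consists of (ℓ+1)/2 pairs
from the matching M₂ = {{2i-1,2i} : 1 ≤ i ≤ n} together with r-ℓ-1 vertices from
(5n, 6n]. -/
noncomputable def constr4 (r ℓ n : ℕ) : Finset (Finset ℕ) :=
  ((Finset.Icc 1 (6 * n)).powersetCard r).filter (fun e =>
    (∀ x ∈ e, x ≤ 2 * n ∨ 5 * n < x) ∧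
    (∀ x ∈ e, x ≤ 2 * n → (if x % 2 = 0 then x - 1 ∈ e else x + 1 ∈ e)) ∧
    (e.filter (fun x => 5 * n < x)).card = r - ℓ - 1)


section ConstrAux

open Finset

lemma constr4_mem {r ℓ n : ℕ} {e : Finset ℕ} :
    e ∈ constr4 r ℓ n ↔ e ⊆ Finset.Icc 1 (6*n) ∧ e.card = r ∧
      (∀ x ∈ e, x ≤ 2*n ∨ 5*n < x) ∧
      (∀ x ∈ e, x ≤ 2*n → (if x % 2 = 0 then x - 1 ∈ e else x + 1 ∈ e)) ∧
      (e.filter (fun x => 5*n < x)).card = r - ℓ - 1 := by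
  classical
  simp only [constr4, Finset.mem_filter, Finset.mem_powersetCard, and_assoc]

lemma constr4_pair {r ℓ n : ℕ} {e : Finset ℕ} (he : e ∈ constr4 r ℓ n)
    {i : ℕ} (hi : 2*i + 2 ≤ 2*n) : (2*i+1 ∈ e ↔ 2*i+2 ∈ e) := by
  obtain ⟨-, -, -, hp, -⟩ := constr4_mem.mp he
  constructor
  · intro h
    have h2 := hp _ h (by omega)
    rw [if_neg (by omega)] at h2
    exact h2
  · intro h
    have h2 := hp _ h (by omega)
    rw [if_pos (by omega)] at h2
    have : 2*i+2-1 = 2*i+1 := by omega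
    rwa [this] at h2

lemma constr4_even_card {r ℓ n : ℕ} {e : Finset ℕ} (he : e ∈ constr4 r ℓ n) :
    ∀ m, m ≤ n → Even ((e.filter (fun x => x ≤ 2*m)).card) := by
  have hsub := (constr4_mem.mp he).1
  intro m
  induction m with
  | zero =>
    intro _
    have h0 : e.filter (fun x => x ≤ 2*0) = ∅ := by
      ext x
      simp only [Finset.mem_filter, Finset.notMem_empty, iff_false, not_and]
      intro hx
      have := Finset.mem_Icc.mp (hsub hx)
      omega
    rw [h0]
    simp
  | succ m ih =>
    intro hm
    have hA : e.filter (fun x => x ≤ 2*(m+1)) =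
        e.filter (fun x => x ≤ 2*m) ∪ e.filter (fun x => 2*m < x ∧ x ≤ 2*(m+1)) := by
      rw [← Finset.filter_or]
      apply Finset.filter_congr
      intro x _
      constructor
      · intro h; omega
      · intro h; omega
    have hdisj : Disjoint (e.filter (fun x => x ≤ 2*m))
        (e.filter (fun x => 2*m < x ∧ x ≤ 2*(m+1))) := by
      rw [Finset.disjoint_left]
      intro z hz hz'
      simp only [Finset.mem_filter] at hz hz'
      omega
    rw [hA, Finset.card_union_of_disjoint hdisj]
    have hB : Even ((e.filter (fun x => 2*m < x ∧ x ≤ 2*(m+1))).card) := by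
      by_cases h1 : 2*m+1 ∈ e
      · have h2 : 2*m+2 ∈ e := (constr4_pair he (by omega)).mp h1
        have : e.filter (fun x => 2*m < x ∧ x ≤ 2*(m+1)) = {2*m+1, 2*m+2} := by
          ext z
          simp only [Finset.mem_filter, Finset.mem_insert, Finset.mem_singleton]
          constructor
          · rintro ⟨hz, h3, h4⟩; omega
          · rintro (rfl | rfl)
            · exact ⟨h1, by omega⟩
            · exact ⟨h2, by omega⟩
        rw [this]
        rw [Finset.card_insert_of_notMem (by simp only [Finset.mem_singleton]; omega),
          Finset.card_singleton]
        exact ⟨1, rfl⟩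
      · have h2 : 2*m+2 ∉ e := fun h => h1 ((constr4_pair he (by omega)).mpr h)
        have : e.filter (fun x => 2*m < x ∧ x ≤ 2*(m+1)) = ∅ := by
          ext z
          simp only [Finset.mem_filter, Finset.notMem_empty, iff_false, not_and]
          intro hz h3
          intro h4
          have : z = 2*m+1 ∨ z = 2*m+2 := by omega
          rcases this with rfl | rfl
          · exact h1 hz
          · exact h2 hz
        rw [this]
        simp
    obtain ⟨u, hu⟩ := ih (by omega)
    obtain ⟨v, hv⟩ := hB
    exact ⟨u + v, by omega⟩

lemma filter_le_card_of_intervals {r j : ℕ} {I : ℕ → Finset ℕ}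
    (hprec : ∀ j j', j < j' → j' < r → Precedes (I j) (I j'))
    {g : Finset ℕ}
    (hcov : ∀ z ∈ g, ∃ k < r, z ∈ I k) (hcard : ∀ k < r, (g ∩ I k).card = 1)
    {x : ℕ} (hj : j < r) (hxj : x ∈ I j) (hub : ∀ z ∈ I j, z ≤ x) :
    (g.filter (fun z => z ≤ x)).card = j + 1 := by
  classical
  have hset : g.filter (fun z => z ≤ x) = (Finset.range (j+1)).biUnion (fun k => g ∩ I k) := by
    ext z
    simp only [Finset.mem_filter, Finset.mem_biUnion, Finset.mem_range, Finset.mem_inter]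
    constructor
    · rintro ⟨hzg, hzx⟩
      obtain ⟨k, hk, hzk⟩ := hcov z hzg
      refine ⟨k, ?_, hzg, hzk⟩
      by_contra hkj
      have hjk : j < k := by omega
      have := hprec j k hjk hk x hxj z hzk
      omega
    · rintro ⟨k, hk, hzg, hzk⟩
      refine ⟨hzg, ?_⟩
      rcases Nat.lt_or_ge k j with h | h
      · exact le_of_lt (hprec k j h hj z hzk x hxj)
      · have hkj : k = j := by omega
        exact hub z (hkj ▸ hzk)
  rw [hset, Finset.card_biUnion]
  · rw [Finset.sum_congr rfl (fun k hk => hcard k (by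
      have := Finset.mem_range.mp hk; omega))]
    simp
  · intro k hk k' hk' hne
    have hd : ∀ a b, a < b → b < r → Disjoint (g ∩ I a) (g ∩ I b) := by
      intro a b hab hb
      rw [Finset.disjoint_left]
      intro z hz hz'
      have := hprec a b hab hb z (Finset.mem_inter.mp hz).2 z (Finset.mem_inter.mp hz').2
      omega
    have hkr : k < r := by have := Finset.mem_range.mp hk; omega
    have hk'r : k' < r := by have := Finset.mem_range.mp hk'; omega
    rcases Nat.lt_or_ge k k' with h | h
    · exact hd k k' h hk'r
    · exact (hd k' k (by omega) hkr).symm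

lemma interval_count {r : ℕ} {I : ℕ → Finset ℕ}
    (hint : ∀ j < r, IsIntervalN (I j))
    (hprec : ∀ j j', j < j' → j' < r → Precedes (I j) (I j'))
    {e f : Finset ℕ}
    (hecov : ∀ x ∈ e, ∃ j < r, x ∈ I j) (hecard : ∀ j < r, (e ∩ I j).card = 1)
    (hfcov : ∀ x ∈ f, ∃ j < r, x ∈ I j) (hfcard : ∀ j < r, (f ∩ I j).card = 1)
    {x : ℕ} (hx : x ∈ e) (hx1 : x + 1 ∈ e) :
    (f.filter (fun z => z ≤ x)).card = (e.filter (fun z => z ≤ x)).card := by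
  obtain ⟨j, hj, hxj⟩ := hecov x hx
  obtain ⟨a, b, hab⟩ := hint j hj
  have hub : ∀ z ∈ I j, z ≤ x := by
    have hx1' : x + 1 ∉ I j := by
      intro hmem
      have h2 : ({x, x+1} : Finset ℕ) ⊆ e ∩ I j := by
        intro z hz
        simp only [Finset.mem_insert, Finset.mem_singleton] at hz
        rcases hz with rfl | rfl
        · exact Finset.mem_inter.mpr ⟨hx, hxj⟩
        · exact Finset.mem_inter.mpr ⟨hx1, hmem⟩
      have h3 := Finset.card_le_card h2
      rw [Finset.card_insert_of_notMem (by simp only [Finset.mem_singleton]; omega),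
        Finset.card_singleton, hecard j hj] at h3
      omega
    intro z hz
    rw [hab, Finset.mem_Icc] at hxj hz hx1'
    omega
  rw [filter_le_card_of_intervals hprec hfcov hfcard hj hxj hub,
    filter_le_card_of_intervals hprec hecov hecard hj hxj hub]

lemma constr4_small_subset {r ℓ n : ℕ} {e f : Finset ℕ}
    (he : e ∈ constr4 r ℓ n) (hf : f ∈ constr4 r ℓ n)
    {I : ℕ → Finset ℕ}
    (hint : ∀ j < r, IsIntervalN (I j))
    (hprec : ∀ j j', j < j' → j' < r → Precedes (I j) (I j'))
    (hecov : ∀ x ∈ e, ∃ j < r, x ∈ I j) (hecard : ∀ j < r, (e ∩ I j).card = 1)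
    (hfcov : ∀ x ∈ f, ∃ j < r, x ∈ I j) (hfcard : ∀ j < r, (f ∩ I j).card = 1) :
    e.filter (fun x => x ≤ 2*n) ⊆ f := by
  have hesub := (constr4_mem.mp he).1
  have key : ∀ m, 2*m+2 ≤ 2*n → 2*m+1 ∈ e → 2*m+1 ∈ f := by
    intro m hm h1
    have h2 : 2*m+2 ∈ e := (constr4_pair he hm).mp h1
    have hcount := interval_count hint hprec hecov hecard hfcov hfcard h1 h2
    have heq : e.filter (fun z => z ≤ 2*m+1) = insert (2*m+1) (e.filter (fun z => z ≤ 2*m)) := by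
      ext z
      simp only [Finset.mem_filter, Finset.mem_insert]
      constructor
      · rintro ⟨hz, hzle⟩
        rcases Nat.lt_or_ge z (2*m+1) with h | h
        · exact Or.inr ⟨hz, by omega⟩
        · exact Or.inl (by omega)
      · rintro (rfl | ⟨hz, hzle⟩)
        · exact ⟨h1, le_refl _⟩
        · exact ⟨hz, by omega⟩
    have hnotmem : 2*m+1 ∉ e.filter (fun z => z ≤ 2*m) := by
      simp only [Finset.mem_filter]
      omega
    have hecardodd : (e.filter (fun z => z ≤ 2*m+1)).card =
        (e.filter (fun z => z ≤ 2*m)).card + 1 := by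
      rw [heq, Finset.card_insert_of_notMem hnotmem]
    by_contra hnf
    have hfeq : f.filter (fun z => z ≤ 2*m+1) = f.filter (fun z => z ≤ 2*m) := by
      apply Finset.filter_congr
      intro z hz
      constructor
      · intro h
        have : z ≠ 2*m+1 := fun hzz => hnf (hzz ▸ hz)
        omega
      · intro h; omega
    obtain ⟨u, hu⟩ := constr4_even_card he m (by omega)
    obtain ⟨v, hv⟩ := constr4_even_card hf m (by omega)
    rw [hfeq] at hcount
    omega
  intro x hx
  rw [Finset.mem_filter] at hx
  obtain ⟨hxe, hxle⟩ := hx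
  have hx1 : 1 ≤ x := (Finset.mem_Icc.mp (hesub hxe)).1
  rcases Nat.even_or_odd x with hpar | hpar
  · -- x even, x = 2*m+2
    obtain ⟨k, hk⟩ := hpar
    have hk2 : x = 2*(k-1)+2 := by omega
    have hmem : 2*(k-1)+1 ∈ e := by
      rw [hk2] at hxe
      exact (constr4_pair he (by omega)).mpr hxe
    have hf1 : 2*(k-1)+1 ∈ f := key (k-1) (by omega) hmem
    have : 2*(k-1)+2 ∈ f := (constr4_pair hf (by omega)).mp hf1
    rwa [hk2]
  · -- x odd, x = 2*m+1
    obtain ⟨k, hk⟩ := hpar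
    have hxle' : 2*k+2 ≤ 2*n := by omega
    have := key k hxle' (hk ▸ hxe)
    rwa [hk]

lemma constr4_card_small {r ℓ n : ℕ} (hℓr : ℓ + 1 ≤ r) {e : Finset ℕ}
    (he : e ∈ constr4 r ℓ n) :
    (e.filter (fun x => x ≤ 2*n)).card = ℓ + 1 := by
  classical
  obtain ⟨hsub, hcard, hsz, -, hbig⟩ := constr4_mem.mp he
  have hsplit := Finset.card_filter_add_card_filter_not
    (s := e) (p := fun x => x ≤ 2*n)
  have hneg : e.filter (fun x => ¬ x ≤ 2*n) = e.filter (fun x => 5*n < x) := by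
    apply Finset.filter_congr
    intro x hx
    have := hsz x hx
    constructor
    · intro h; omega
    · intro h; omega
  rw [hneg, hbig, hcard] at hsplit
  omega

end ConstrAux

section ConstrCount

open Finset

lemma constr4_odds_eq {r ℓ n : ℕ} {e : Finset ℕ} (he : e ∈ constr4 r ℓ n) :
    e.filter (fun x => x ≤ 2*n ∧ x % 2 = 1) =
      (e.filter (fun x => x ≤ 2*n ∧ x % 2 = 0)).image (fun x => x - 1) := by
  obtain ⟨hsub, hcard, hsz, hpair, hbig⟩ := constr4_mem.mp he
  ext z
  simp only [Finset.mem_filter, Finset.mem_image]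
  constructor
  · rintro ⟨hz, hzle, hzodd⟩
    have hz1 : z + 1 ∈ e := by
      have := hpair z hz hzle
      rwa [if_neg (by omega)] at this
    exact ⟨z + 1, ⟨hz1, by omega, by omega⟩, by omega⟩
  · rintro ⟨x, ⟨hx, hxle, hxev⟩, rfl⟩
    have hx1 : 1 ≤ x := (Finset.mem_Icc.mp (hsub hx)).1
    have hxm : x - 1 ∈ e := by
      have := hpair x hx hxle
      rwa [if_pos hxev] at this
    exact ⟨hxm, by omega, by omega⟩

lemma constr4_evens_card {r ℓ n p : ℕ} (h2p : ℓ + 1 = 2*p) (hℓr : ℓ + 1 ≤ r)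
    {e : Finset ℕ} (he : e ∈ constr4 r ℓ n) :
    (e.filter (fun x => x ≤ 2*n ∧ x % 2 = 0)).card = p := by
  classical
  obtain ⟨hsub, hcard, hsz, hpair, hbig⟩ := constr4_mem.mp he
  set A := e.filter (fun x => x ≤ 2*n ∧ x % 2 = 0) with hA
  set O := e.filter (fun x => x ≤ 2*n ∧ x % 2 = 1) with hO
  have hOA : O = A.image (fun x => x - 1) := constr4_odds_eq he
  have hinjA : Set.InjOn (fun x => x - 1) ↑A := by
    intro x hx y hy hxy
    simp only [hA, Finset.coe_filter, Set.mem_setOf_eq] at hx hy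
    have hx1 : 1 ≤ x := (Finset.mem_Icc.mp (hsub hx.1)).1
    have hy1 : 1 ≤ y := (Finset.mem_Icc.mp (hsub hy.1)).1
    simp only at hxy
    omega
  have hOcard : O.card = A.card := by rw [hOA, Finset.card_image_of_injOn hinjA]
  have hsmall : (e.filter (fun x => x ≤ 2*n)).card = ℓ + 1 := constr4_card_small hℓr he
  have hsplit : A.card + O.card = (e.filter (fun x => x ≤ 2*n)).card := by
    have h := Finset.card_filter_add_card_filter_not
      (s := e.filter (fun x => x ≤ 2*n)) (p := fun x => x % 2 = 0)
    rw [Finset.filter_filter, Finset.filter_filter] at h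
    have h2 : (e.filter fun a => a ≤ 2*n ∧ ¬ a % 2 = 0) = O := by
      apply Finset.filter_congr
      intro x _
      constructor
      · rintro ⟨h', h''⟩; exact ⟨h', by omega⟩
      · rintro ⟨h', h''⟩; exact ⟨h', by omega⟩
    rw [h2] at h
    exact h
  omega

lemma constr4_bij_card {r ℓ n p q : ℕ} (hn : 1 ≤ n) (h2p : ℓ + 1 = 2*p)
    (hq : q = r - ℓ - 1) (hℓr : ℓ + 1 ≤ r) :
    (constr4 r ℓ n).card = Nat.choose n p * Nat.choose n q := by
  classical
  have htarget : (((Finset.Icc 1 n).powersetCard p) ×ˢ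
      ((Finset.Icc 1 n).powersetCard q)).card = Nat.choose n p * Nat.choose n q := by
    rw [Finset.card_product, Finset.card_powersetCard, Finset.card_powersetCard,
      Nat.card_Icc]
    norm_num
  rw [← htarget]
  apply Finset.card_nbij'
    (i := fun e => ((e.filter (fun x => x ≤ 2*n ∧ x % 2 = 0)).image (fun x => x / 2),
      (e.filter (fun x => 5*n < x)).image (fun x => x - 5*n)))
    (j := fun S => (S.1.image (fun i => 2*i)) ∪ (S.1.image (fun i => 2*i - 1))
      ∪ (S.2.image (fun j => 5*n + j)))
  · -- forward maps into target
    intro e he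
    obtain ⟨hsub, hcard, hsz, hpair, hbig⟩ := constr4_mem.mp he
    rw [Finset.mem_coe, Finset.mem_product]
    constructor
    · rw [Finset.mem_powersetCard]
      constructor
      · intro z hz
        simp only [Finset.mem_image, Finset.mem_filter] at hz
        obtain ⟨x, ⟨hx, hxle, hxev⟩, rfl⟩ := hz
        have hx1 : 1 ≤ x := (Finset.mem_Icc.mp (hsub hx)).1
        rw [Finset.mem_Icc]
        omega
      · rw [Finset.card_image_of_injOn]
        · exact constr4_evens_card h2p hℓr he
        · intro x hx y hy hxy
          simp only [Finset.coe_filter, Set.mem_setOf_eq] at hx hy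
          simp only at hxy
          omega
    · rw [Finset.mem_powersetCard]
      constructor
      · intro z hz
        simp only [Finset.mem_image, Finset.mem_filter] at hz
        obtain ⟨x, ⟨hx, hxgt⟩, rfl⟩ := hz
        have hx6 : x ≤ 6*n := (Finset.mem_Icc.mp (hsub hx)).2
        rw [Finset.mem_Icc]
        omega
      · rw [Finset.card_image_of_injOn, hbig, hq]
        intro x hx y hy hxy
        simp only [Finset.coe_filter, Set.mem_setOf_eq] at hx hy
        simp only at hxy
        omega
  · -- backward maps into source
    intro S hS
    rw [Finset.mem_coe, Finset.mem_product, Finset.mem_powersetCard, Finset.mem_powersetCard] at hS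
    obtain ⟨⟨hS1, hS1c⟩, hS2, hS2c⟩ := hS
    have hmemS : ∀ i ∈ S.1, 1 ≤ i ∧ i ≤ n := fun i hi => Finset.mem_Icc.mp (hS1 hi)
    have hmemT : ∀ j ∈ S.2, 1 ≤ j ∧ j ≤ n := fun j hj => Finset.mem_Icc.mp (hS2 hj)
    set E := (S.1.image (fun i => 2*i)) ∪ (S.1.image (fun i => 2*i - 1))
      ∪ (S.2.image (fun j => 5*n + j)) with hE
    have hEmem : ∀ z, z ∈ E ↔ ((∃ i ∈ S.1, 2*i = z) ∨ (∃ i ∈ S.1, 2*i - 1 = z)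
        ∨ (∃ j ∈ S.2, 5*n + j = z)) := by
      intro z
      simp only [hE, Finset.mem_union, Finset.mem_image, or_assoc]
    have hbigE : E.filter (fun x => 5*n < x) = S.2.image (fun j => 5*n + j) := by
      ext z
      simp only [Finset.mem_filter, hEmem, Finset.mem_image]
      constructor
      · rintro ⟨(⟨i, hi, rfl⟩ | ⟨i, hi, rfl⟩ | ⟨j, hj, rfl⟩), hgt⟩
        · have := hmemS i hi; omega
        · have := hmemS i hi; omega
        · exact ⟨j, hj, rfl⟩
      · rintro ⟨j, hj, rfl⟩
        have := hmemT j hj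
        exact ⟨Or.inr (Or.inr ⟨j, hj, rfl⟩), by omega⟩
    show E ∈ constr4 r ℓ n
    rw [constr4_mem]
    refine ⟨?_, ?_, ?_, ?_, ?_⟩
    · intro z hz
      rw [hEmem] at hz
      rw [Finset.mem_Icc]
      rcases hz with ⟨i, hi, rfl⟩ | ⟨i, hi, rfl⟩ | ⟨j, hj, rfl⟩
      · have := hmemS i hi; omega
      · have := hmemS i hi; omega
      · have := hmemT j hj; omega
    · -- cardinality
      have hd1 : Disjoint (S.1.image (fun i => 2*i)) (S.1.image (fun i => 2*i - 1)) := by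
        rw [Finset.disjoint_left]
        intro z hz hz'
        simp only [Finset.mem_image] at hz hz'
        obtain ⟨i, hi, rfl⟩ := hz
        obtain ⟨i', hi', heq⟩ := hz'
        have := hmemS i hi
        have := hmemS i' hi'
        omega
      have hd2 : Disjoint ((S.1.image (fun i => 2*i)) ∪ (S.1.image (fun i => 2*i - 1)))
          (S.2.image (fun j => 5*n + j)) := by
        rw [Finset.disjoint_left]
        intro z hz hz'
        simp only [Finset.mem_union, Finset.mem_image] at hz hz'
        obtain ⟨j, hj, rfl⟩ := hz'
        have := hmemT j hj
        rcases hz with ⟨i, hi, heq⟩ | ⟨i, hi, heq⟩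
        · have := hmemS i hi; omega
        · have := hmemS i hi; omega
      have hc1 : (S.1.image (fun i => 2*i)).card = p := by
        rw [Finset.card_image_of_injOn (fun x _ y _ h => by omega), hS1c]
      have hc2 : (S.1.image (fun i => 2*i - 1)).card = p := by
        rw [Finset.card_image_of_injOn, hS1c]
        intro x hx y hy h
        have := hmemS x hx
        have := hmemS y hy
        simp only at h
        omega
      have hc3 : (S.2.image (fun j => 5*n + j)).card = q := by
        rw [Finset.card_image_of_injOn (fun x _ y _ h => by omega), hS2c]
      rw [hE, Finset.card_union_of_disjoint hd2, Finset.card_union_of_disjoint hd1,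
        hc1, hc2, hc3]
      omega
    · intro z hz
      rw [hEmem] at hz
      rcases hz with ⟨i, hi, rfl⟩ | ⟨i, hi, rfl⟩ | ⟨j, hj, rfl⟩
      · have := hmemS i hi; left; omega
      · have := hmemS i hi; left; omega
      · have := hmemT j hj; right; omega
    · intro z hz hzle
      rw [hEmem] at hz
      rcases hz with ⟨i, hi, rfl⟩ | ⟨i, hi, rfl⟩ | ⟨j, hj, rfl⟩
      · have hi' := hmemS i hi
        rw [if_pos (by omega), hEmem]
        exact Or.inr (Or.inl ⟨i, hi, rfl⟩)
      · have hi' := hmemS i hi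
        rw [if_neg (by omega), hEmem]
        left
        exact ⟨i, hi, by omega⟩
      · have := hmemT j hj
        omega
    · rw [hbigE]
      rw [Finset.card_image_of_injOn (fun x _ y _ h => by omega), hS2c, hq]
  · -- left inverse
    intro e he
    obtain ⟨hsub, hcard, hsz, hpair, hbig⟩ := constr4_mem.mp he
    dsimp only
    have h1 : ((e.filter (fun x => x ≤ 2*n ∧ x % 2 = 0)).image (fun x => x / 2)).image
        (fun i => 2 * i) = e.filter (fun x => x ≤ 2*n ∧ x % 2 = 0) := by
      rw [Finset.image_image]
      have hEq : Set.EqOn ((fun i => 2 * i) ∘ (fun x => x / 2)) id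
          ↑(e.filter (fun x => x ≤ 2*n ∧ x % 2 = 0)) := by
        intro x hx
        simp only [Finset.coe_filter, Set.mem_setOf_eq] at hx
        simp only [Function.comp_apply, id_eq]
        omega
      rw [Finset.image_congr hEq, Finset.image_id]
    have h2 : ((e.filter (fun x => x ≤ 2*n ∧ x % 2 = 0)).image (fun x => x / 2)).image
        (fun i => 2 * i - 1) = e.filter (fun x => x ≤ 2*n ∧ x % 2 = 1) := by
      rw [Finset.image_image, constr4_odds_eq he]
      apply Finset.image_congr
      intro x hx
      simp only [Finset.coe_filter, Set.mem_setOf_eq] at hx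
      simp only [Function.comp_apply]
      omega
    have h3 : ((e.filter (fun x => 5*n < x)).image (fun x => x - 5*n)).image
        (fun j => 5*n + j) = e.filter (fun x => 5*n < x) := by
      rw [Finset.image_image]
      have hEq : Set.EqOn ((fun j => 5*n + j) ∘ (fun x => x - 5*n)) id
          ↑(e.filter (fun x => 5*n < x)) := by
        intro x hx
        simp only [Finset.coe_filter, Set.mem_setOf_eq] at hx
        simp only [Function.comp_apply, id_eq]
        omega
      rw [Finset.image_congr hEq, Finset.image_id]
    rw [h1, h2, h3]
    ext z
    simp only [Finset.mem_union, Finset.mem_filter]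
    constructor
    · rintro ((⟨hz, -⟩ | ⟨hz, -⟩) | ⟨hz, -⟩) <;> exact hz
    · intro hz
      rcases hsz z hz with hle | hgt
      · rcases Nat.even_or_odd z with ⟨c, hc⟩ | ⟨c, hc⟩
        · exact Or.inl (Or.inl ⟨hz, hle, by omega⟩)
        · exact Or.inl (Or.inr ⟨hz, hle, by omega⟩)
      · exact Or.inr ⟨hz, hgt⟩
  · -- right inverse
    intro S hS
    rw [Finset.mem_coe, Finset.mem_product, Finset.mem_powersetCard, Finset.mem_powersetCard] at hS
    obtain ⟨⟨hS1, hS1c⟩, hS2, hS2c⟩ := hS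
    have hmemS : ∀ i ∈ S.1, 1 ≤ i ∧ i ≤ n := fun i hi => Finset.mem_Icc.mp (hS1 hi)
    have hmemT : ∀ j ∈ S.2, 1 ≤ j ∧ j ≤ n := fun j hj => Finset.mem_Icc.mp (hS2 hj)
    have h1 : (((S.1.image (fun i => 2*i)) ∪ (S.1.image (fun i => 2*i - 1))
        ∪ (S.2.image (fun j => 5*n + j))).filter
        (fun x => x ≤ 2*n ∧ x % 2 = 0)) = S.1.image (fun i => 2*i) := by
      ext z
      simp only [Finset.mem_filter, Finset.mem_union, Finset.mem_image]
      constructor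
      · rintro ⟨(⟨i, hi, rfl⟩ | ⟨i, hi, rfl⟩) | ⟨j, hj, rfl⟩, hle, hev⟩
        · exact ⟨i, hi, rfl⟩
        · have := hmemS i hi; omega
        · have := hmemT j hj; omega
      · rintro ⟨i, hi, rfl⟩
        have := hmemS i hi
        exact ⟨Or.inl (Or.inl ⟨i, hi, rfl⟩), by omega, by omega⟩
    have h2 : (((S.1.image (fun i => 2*i)) ∪ (S.1.image (fun i => 2*i - 1))
        ∪ (S.2.image (fun j => 5*n + j))).filter
        (fun x => 5*n < x)) = S.2.image (fun j => 5*n + j) := by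
      ext z
      simp only [Finset.mem_filter, Finset.mem_union, Finset.mem_image]
      constructor
      · rintro ⟨(⟨i, hi, rfl⟩ | ⟨i, hi, rfl⟩) | ⟨j, hj, rfl⟩, hgt⟩
        · have := hmemS i hi; omega
        · have := hmemS i hi; omega
        · exact ⟨j, hj, rfl⟩
      · rintro ⟨j, hj, rfl⟩
        have := hmemT j hj
        exact ⟨Or.inr ⟨j, hj, rfl⟩, by omega⟩
    dsimp only
    rw [h1, h2]
    have h3 : (S.1.image (fun i => 2*i)).image (fun x => x / 2) = S.1 := by
      rw [Finset.image_image]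
      have hEq : Set.EqOn ((fun x => x / 2) ∘ (fun i => 2*i)) id ↑S.1 := by
        intro x _
        simp only [Function.comp_apply, id_eq]
        omega
      rw [Finset.image_congr hEq, Finset.image_id]
    have h4 : (S.2.image (fun j => 5*n + j)).image (fun x => x - 5*n) = S.2 := by
      rw [Finset.image_image]
      have hEq : Set.EqOn ((fun x => x - 5*n) ∘ (fun j => 5*n + j)) id ↑S.2 := by
        intro x _
        simp only [Function.comp_apply, id_eq]
        omega
      rw [Finset.image_congr hEq, Finset.image_id]
    rw [h3, h4]

end ConstrCount

/-- Construction 4: for ℓ odd with α = r - (ℓ+1)/2 ≥ ℓ, the graph `constr4 r ℓ n` has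
exactly C(n,(ℓ+1)/2)·C(n,r-ℓ-1) = Θ(n^α) edges and contains no two edges sharing
exactly ℓ vertices that form an interval r-partite configuration. -/
theorem constr4_properties (r ℓ : ℕ) (hr : 2 ≤ r) (hℓ₂ : ℓ ≤ r - 1) (hodd : Odd ℓ)
    (hα : ℓ ≤ r - (ℓ + 1) / 2) :
    (∀ n : ℕ, 1 ≤ n →
      (constr4 r ℓ n).card = Nat.choose n ((ℓ + 1) / 2) * Nat.choose n (r - ℓ - 1)) ∧
    (∃ c₁ c₂ : ℝ, 0 < c₁ ∧ 0 < c₂ ∧ ∃ N : ℕ, ∀ n : ℕ, N ≤ n →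
      c₁ * (n : ℝ) ^ (r - (ℓ + 1) / 2) ≤ ((constr4 r ℓ n).card : ℝ) ∧
      ((constr4 r ℓ n).card : ℝ) ≤ c₂ * (n : ℝ) ^ (r - (ℓ + 1) / 2)) ∧
    (∀ n : ℕ, ∀ e ∈ constr4 r ℓ n, ∀ f ∈ constr4 r ℓ n,
      IntervalPartiteExact r {e, f} → (e ∩ f).card ≠ ℓ) := by
  have hℓr : ℓ + 1 ≤ r := by omega
  obtain ⟨k, hk⟩ := hodd
  set p := (ℓ + 1) / 2 with hpdef
  set q := r - ℓ - 1 with hqdef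
  have h2p : ℓ + 1 = 2 * p := by omega
  refine ⟨?_, ?_, ?_⟩
  · intro n hn
    exact constr4_bij_card hn h2p hqdef hℓr
  · -- asymptotics
    have hpq : p + q = r - p := by omega
    refine ⟨(1/2 : ℝ)^(r - p) / ((p.factorial : ℝ) * q.factorial), 1,
      by positivity, one_pos, 2*r, ?_⟩
    intro n hn
    have hn1 : 1 ≤ n := by omega
    rw [constr4_bij_card hn1 h2p hqdef hℓr]
    have hlow : ∀ k : ℕ, 2*k ≤ n → ((n:ℝ)/2)^k / k.factorial ≤ n.choose k := by
      intro k hkn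
      have hkle : k ≤ n + 1 := by omega
      have hc : ((n + 1 - k : ℕ) : ℝ) = (n : ℝ) + 1 - k := by
        push_cast [hkle]
        ring
      have hle : (n:ℝ)/2 ≤ ((n + 1 - k : ℕ) : ℝ) := by
        rw [hc]
        have h2k : (2 : ℝ) * k ≤ n := by exact_mod_cast hkn
        linarith
      have hstep : ((n:ℝ)/2)^k / k.factorial ≤ (((n + 1 - k : ℕ) : ℝ)^k) / k.factorial := by
        gcongr
        all_goals first | exact hle | positivity
      have hpc := Nat.pow_le_choose (α := ℝ) k n
      push_cast at hpc
      exact hstep.trans hpc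
    constructor
    · -- lower bound
      have h1 := hlow p (by omega)
      have h2 := hlow q (by omega)
      have hc : (1/2 : ℝ)^(r - p) / ((p.factorial : ℝ) * q.factorial) * (n:ℝ)^(r - p)
          = (((n:ℝ)/2)^p / p.factorial) * (((n:ℝ)/2)^q / q.factorial) := by
        rw [← hpq, pow_add, pow_add]
        have hp0 : (p.factorial : ℝ) ≠ 0 := by positivity
        have hq0 : (q.factorial : ℝ) ≠ 0 := by positivity
        field_simp
        ring
      rw [hc]
      push_cast
      exact mul_le_mul h1 h2 (by positivity) (by positivity)
    · -- upper bound
      rw [one_mul]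
      have h1 : (n.choose p : ℝ) ≤ (n:ℝ)^p := by exact_mod_cast Nat.choose_le_pow n p
      have h2 : (n.choose q : ℝ) ≤ (n:ℝ)^q := by exact_mod_cast Nat.choose_le_pow n q
      calc ((n.choose p * n.choose q : ℕ) : ℝ) = (n.choose p : ℝ) * n.choose q := by
            push_cast; ring
        _ ≤ (n:ℝ)^p * (n:ℝ)^q := mul_le_mul h1 h2 (by positivity) (by positivity)
        _ = (n:ℝ)^(r - p) := by rw [← pow_add, hpq]
  · -- no interval r-partite pair with intersection ℓ
    intro n e he f hf hIP
    obtain ⟨I, hint, hprec, hedges⟩ := hIP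
    have heE := hedges e (Finset.mem_insert_self e {f})
    have hfE := hedges f (Finset.mem_insert_of_mem (Finset.mem_singleton_self f))
    have hef : e.filter (fun x => x ≤ 2*n) ⊆ f :=
      constr4_small_subset he hf hint hprec heE.1 heE.2 hfE.1 hfE.2
    have hsubef : e.filter (fun x => x ≤ 2*n) ⊆ e ∩ f := by
      intro z hz
      exact Finset.mem_inter.mpr ⟨Finset.mem_of_mem_filter z hz, hef hz⟩
    have hge := Finset.card_le_card hsubef
    rw [constr4_card_small hℓr he] at hge
    omega
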